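/- Let ρ : sl(3,ℂ) → End(V) be a representation on a complex vector space V such that ρ(E₁₂), ρ(E₁₃), ρ(E₂₃) act nilpotently, let v ∈ V have weight (λ₁, λ₂), and assume λ₁ + k + 1 ≠ 0, λ₂ + k + 1 ≠ 0 and λ₁ + λ₂ + k + 2 ≠ 0 for all integers k ≥ 1. Then the vector Pv = (P₁₂ ∘ P₁₃ ∘ P₂₃)v given by the three-factor extremal projector satisfies ρ(E₁₂)(Pv) = 0, ρ(E₂₃)(Pv) = 0 and ρ(E₁₃)(Pv) = 0. -/

import Mathlib

/-!
Each factor `P = ∑ c_n F^n E^n` is the truncated extremal projector of an `sl₂`-triple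
`(E, F, H)`. On a vector `w` of `H`-weight `μ`, the `sl₂` identity
`E F^(n+1) = F^(n+1) E + (n+1) F^n (H - n)` turns `E (P w)` into `c_N F^N E^(N+1) w` plus a
sum whose `m`-th coefficient is `c_m + (m+1)(μ+m+2) c_(m+1)`; with the denominators `μ + k + 1`
these coefficients vanish, so `E` kills `P w` as soon as `E^(N+1) = 0`. This gives `E₂₃ w = 0`
for `w = P₂₃ v` and `E₁₂ (P v) = 0`.

The factor `P₁₃` uses the denominators `λ₁ + λ₂ + k + 2`, one more than its own triple asks for
(`H₁₃ w = (λ₁ + λ₂) w`), and the leftover is `E₁₃ x = -∑ (m+1) c_(m+1) E₃₁^m E₁₃^(m+1) w` for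
`x = P₁₃ w`. Commuting `E₂₃` through `P₁₃` (it commutes with `E₁₃`, `[E₂₃, E₃₁] = E₂₁`, and
`E₂₃ w = 0`) produces the same sum, whence `E₂₃ x = -E₂₁ E₁₃ x`. This relation makes
`E₂₃ (P₁₂ x)` telescope to a multiple of `E₁₂^N E₁₃ x`, which vanishes because
`[E₂₃, E₁₂] = -E₁₃` commutes with `E₁₂` and `E₁₂^(N+1) = 0`. Finally `E₁₃ = [E₁₂, E₂₃]`.
-/

open LieAlgebra.SpecialLinear Finset

attribute [local instance] LieRing.ofAssociativeRing

/-- The elementary matrix `E₁₂` in `sl(3,ℂ)`. -/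
noncomputable def sl3E₁₂ : sl (Fin 3) ℂ := single 0 1 (by decide) (1 : ℂ)
/-- The elementary matrix `E₁₃` in `sl(3,ℂ)`. -/
noncomputable def sl3E₁₃ : sl (Fin 3) ℂ := single 0 2 (by decide) (1 : ℂ)
/-- The elementary matrix `E₂₃` in `sl(3,ℂ)`. -/
noncomputable def sl3E₂₃ : sl (Fin 3) ℂ := single 1 2 (by decide) (1 : ℂ)
/-- The elementary matrix `E₂₁` in `sl(3,ℂ)`. -/
noncomputable def sl3E₂₁ : sl (Fin 3) ℂ := single 1 0 (by decide) (1 : ℂ)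
/-- The elementary matrix `E₃₁` in `sl(3,ℂ)`. -/
noncomputable def sl3E₃₁ : sl (Fin 3) ℂ := single 2 0 (by decide) (1 : ℂ)
/-- The elementary matrix `E₃₂` in `sl(3,ℂ)`. -/
noncomputable def sl3E₃₂ : sl (Fin 3) ℂ := single 2 1 (by decide) (1 : ℂ)

/-- The Cartan element `E₁₁ − E₂₂` of `sl(3,ℂ)`. -/
noncomputable def sl3H₁ : sl (Fin 3) ℂ :=
  ⟨Matrix.single 0 0 (1 : ℂ) - Matrix.single 1 1 (1 : ℂ), by
    change Matrix.traceLinearMap (Fin 3) ℂ ℂ _ = 0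
    simp [Matrix.trace_single_eq_same]⟩

/-- The Cartan element `E₂₂ − E₃₃` of `sl(3,ℂ)`. -/
noncomputable def sl3H₂ : sl (Fin 3) ℂ :=
  ⟨Matrix.single 1 1 (1 : ℂ) - Matrix.single 2 2 (1 : ℂ), by
    change Matrix.traceLinearMap (Fin 3) ℂ ℂ _ = 0
    simp [Matrix.trace_single_eq_same]⟩

/-- One factor `Σ_{n=0}^{N} ((−1)^n/(n!·∏_{k=1}^{n} d k)) · lower^n ∘ raise^n` of the
extremal projector. -/
noncomputable def slProjFactor {V : Type*} [AddCommGroup V] [Module ℂ V]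
    (lower raise : Module.End ℂ V) (d : ℕ → ℂ) (N : ℕ) : Module.End ℂ V :=
  ∑ n ∈ Finset.range (N + 1),
    (((-1 : ℂ) ^ n / ((n.factorial : ℂ) * ∏ k ∈ Finset.Icc 1 n, d k)) • (lower ^ n * raise ^ n))

/-- The `sl(3)` extremal projector `P = P₁₂ ∘ P₁₃ ∘ P₂₃` on weight-`(lam₁, lam₂)` vectors,
with each factor truncated at `N` (exact whenever the raising operators are
`(N+1)`-step nilpotent). -/
noncomputable def sl3Projector {V : Type*} [AddCommGroup V] [Module ℂ V]
    (ρ : sl (Fin 3) ℂ →ₗ⁅ℂ⁆ Module.End ℂ V) (lam₁ lam₂ : ℂ) (N : ℕ) : Module.End ℂ V :=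
  slProjFactor (ρ sl3E₂₁) (ρ sl3E₁₂) (fun k => lam₁ + k + 1) N *
    slProjFactor (ρ sl3E₃₁) (ρ sl3E₁₃) (fun k => lam₁ + lam₂ + k + 2) N *
      slProjFactor (ρ sl3E₃₂) (ρ sl3E₂₃) (fun k => lam₂ + k + 1) N

noncomputable def extremalCoeff (d : ℕ → ℂ) (n : ℕ) : ℂ :=
  (-1 : ℂ) ^ n / ((n.factorial : ℂ) * ∏ k ∈ Icc 1 n, d k)

@[simp]
lemma extremalCoeff_zero (d : ℕ → ℂ) : extremalCoeff d 0 = 1 := by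
  simp [extremalCoeff]

lemma extremalCoeff_succ (d : ℕ → ℂ) (n : ℕ) :
    extremalCoeff d (n + 1) = -extremalCoeff d n / (((n : ℂ) + 1) * d (n + 1)) := by
  simp only [extremalCoeff, Nat.factorial_succ, prod_Icc_succ_top (by omega : 1 ≤ n + 1),
    pow_succ, Nat.cast_mul, Nat.cast_succ]
  field_simp

lemma extremalCoeff_add_mul_extremalCoeff_succ (d : ℕ → ℂ) (n : ℕ) (hd : d (n + 1) ≠ 0) :
    extremalCoeff d n + ((n : ℂ) + 1) * d (n + 1) * extremalCoeff d (n + 1) = 0 := by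
  rw [extremalCoeff_succ]
  field_simp
  ring

section Operators

variable {V : Type*} [AddCommGroup V] [Module ℂ V]

lemma slProjFactor_apply (F E : Module.End ℂ V) (d : ℕ → ℂ) (N : ℕ) (w : V) :
    slProjFactor F E d N w = ∑ n ∈ range (N + 1), extremalCoeff d n • (F ^ n) ((E ^ n) w) := by
  simp [slProjFactor, extremalCoeff, LinearMap.sum_apply]

lemma slProjFactor_succ_apply (F E : Module.End ℂ V) (d : ℕ → ℂ) (N : ℕ) (w : V) :
    slProjFactor F E d (N + 1) w =
      slProjFactor F E d N w + extremalCoeff d (N + 1) • (F ^ (N + 1)) ((E ^ (N + 1)) w) := by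
  rw [slProjFactor_apply, slProjFactor_apply, sum_range_succ]

lemma apply_apply_of_lie_eq {A B C : Module.End ℂ V} (h : ⁅A, B⁆ = C) (u : V) :
    A (B u) = B (A u) + C u := by
  rw [← h, Ring.lie_def]
  simp

lemma apply_pow_apply_of_commute {A B : Module.End ℂ V} (h : Commute A B) (n : ℕ) (u : V) :
    A ((B ^ n) u) = (B ^ n) (A u) :=
  LinearMap.congr_fun (h.pow_right n).eq u

lemma apply_pow_succ_apply_of_lie_eq {A B C : Module.End ℂ V} (h : ⁅A, B⁆ = C)
    (hC : Commute C B) (n : ℕ) (u : V) :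
    A ((B ^ (n + 1)) u) = (B ^ (n + 1)) (A u) + ((n : ℂ) + 1) • (B ^ n) (C u) := by
  induction n generalizing u with
  | zero => simpa using apply_apply_of_lie_eq h u
  | succ n ih =>
    have hCB : C (B u) = B (C u) := LinearMap.congr_fun hC.eq u
    rw [pow_succ, Module.End.mul_apply, ih, apply_apply_of_lie_eq h, hCB, map_add,
      Module.End.mul_apply, ← Module.End.mul_apply (B ^ n) B, ← pow_succ]
    push_cast
    module

lemma apply_pow_apply_of_lie_eq_smul {H X : Module.End ℂ V} {c μ : ℂ} (hX : ⁅H, X⁆ = c • X)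
    {u : V} (hu : H u = μ • u) (n : ℕ) :
    H ((X ^ n) u) = (μ + n * c) • (X ^ n) u := by
  induction n with
  | zero => simpa using hu
  | succ n ih =>
    rw [pow_succ', Module.End.mul_apply, apply_apply_of_lie_eq hX, ih]
    simp only [map_smul, LinearMap.smul_apply]
    push_cast
    module

lemma apply_slProjFactor_apply_of_lie_eq_smul {H E F : Module.End ℂ V} {c μ : ℂ}
    (hE : ⁅H, E⁆ = c • E) (hF : ⁅H, F⁆ = -c • F) (d : ℕ → ℂ) (N : ℕ) {w : V} (hw : H w = μ • w) :
    H (slProjFactor F E d N w) = μ • slProjFactor F E d N w := by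
  rw [slProjFactor_apply, map_sum, smul_sum]
  refine sum_congr rfl fun n _ => ?_
  rw [map_smul, apply_pow_apply_of_lie_eq_smul hF (apply_pow_apply_of_lie_eq_smul hE hw n),
    smul_comm]
  congr 2
  ring

lemma pow_apply_eq_zero_of_lie_eq {A B C : Module.End ℂ V} (h : ⁅A, B⁆ = C) (hC : Commute C B)
    {n : ℕ} (hB : B ^ (n + 1) = 0) (u : V) : (B ^ n) (C u) = 0 := by
  have key := apply_pow_succ_apply_of_lie_eq h hC n u
  rw [hB, LinearMap.zero_apply, LinearMap.zero_apply, map_zero, zero_add, eq_comm,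
    smul_eq_zero] at key
  exact key.resolve_left (Nat.cast_add_one_ne_zero n)

lemma apply_slProjFactor_apply_of_commute_lower {A F E C : Module.End ℂ V} (hAF : Commute A F)
    (hAE : ⁅A, E⁆ = C) (hCE : Commute C E) (d : ℕ → ℂ) (N : ℕ) (x : V) :
    A (slProjFactor F E d N x) = slProjFactor F E d N (A x) +
      ∑ m ∈ range N, (((m : ℂ) + 1) * extremalCoeff d (m + 1)) • (F ^ (m + 1)) ((E ^ m) (C x)) := by
  induction N with
  | zero => simp [slProjFactor_apply]
  | succ N ih =>
    rw [slProjFactor_succ_apply, slProjFactor_succ_apply, map_add, map_smul, ih,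
      apply_pow_apply_of_commute hAF, apply_pow_succ_apply_of_lie_eq hAE hCE, sum_range_succ]
    simp only [map_add, map_smul]
    module

lemma apply_slProjFactor_apply_of_commute_raise {A F E C : Module.End ℂ V} (hAE : Commute A E)
    (hAF : ⁅A, F⁆ = C) (hCF : Commute C F) (d : ℕ → ℂ) (N : ℕ) {w : V} (hw : A w = 0) :
    A (slProjFactor F E d N w) =
      ∑ m ∈ range N, (((m : ℂ) + 1) * extremalCoeff d (m + 1)) • (F ^ m) (C ((E ^ (m + 1)) w)) := by
  induction N with
  | zero => simp [slProjFactor_apply, hw]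
  | succ N ih =>
    rw [slProjFactor_succ_apply, map_add, map_smul, ih, apply_pow_succ_apply_of_lie_eq hAF hCF,
      apply_pow_apply_of_commute hAE, hw, map_zero, map_zero, zero_add, sum_range_succ, smul_smul,
      mul_comm]

end Operators

section Sl2

variable {V : Type*} [AddCommGroup V] [Module ℂ V] {L : Type*} [LieRing L] [LieAlgebra ℂ L]
  (ρ : L →ₗ⁅ℂ⁆ Module.End ℂ V)

lemma map_lie_eq_of_lie_eq {a b c : L} (h : ⁅a, b⁆ = c) : ⁅ρ a, ρ b⁆ = ρ c := by
  rw [← LieHom.map_lie, h]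

lemma commute_map_of_lie_eq_zero {a b : L} (h : ⁅a, b⁆ = 0) : Commute (ρ a) (ρ b) :=
  commute_iff_lie_eq.2 (by rw [map_lie_eq_of_lie_eq ρ h, map_zero])

namespace IsSl2Triple

variable {h e f : L}

lemma lie_map_e_map_f (t : IsSl2Triple h e f) : ⁅ρ e, ρ f⁆ = ρ h :=
  map_lie_eq_of_lie_eq ρ t.lie_e_f

lemma lie_map_h_map_e (t : IsSl2Triple h e f) : ⁅ρ h, ρ e⁆ = (2 : ℂ) • ρ e := by
  rw [map_lie_eq_of_lie_eq ρ (t.lie_h_e_smul ℂ), map_smul]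

lemma lie_map_h_map_f (t : IsSl2Triple h e f) : ⁅ρ h, ρ f⁆ = -(2 : ℂ) • ρ f := by
  rw [map_lie_eq_of_lie_eq ρ (t.lie_lie_smul_f ℂ), map_neg, map_smul, neg_smul]

lemma map_e_map_f_pow_succ_apply (t : IsSl2Triple h e f) {u : V} {ν : ℂ} (hu : ρ h u = ν • u)
    (n : ℕ) :
    ρ e ((ρ f ^ (n + 1)) u) =
      (ρ f ^ (n + 1)) (ρ e u) + (((n : ℂ) + 1) * (ν - n)) • (ρ f ^ n) u := by
  induction n generalizing u ν with
  | zero => simpa [hu] using apply_apply_of_lie_eq (t.lie_map_e_map_f ρ) u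
  | succ n ih =>
    have hfu : ρ h (ρ f u) = (ν - 2) • ρ f u := by
      simpa [sub_eq_add_neg] using apply_pow_apply_of_lie_eq_smul (t.lie_map_h_map_f ρ) hu 1
    rw [pow_succ, Module.End.mul_apply, ih hfu, apply_apply_of_lie_eq (t.lie_map_e_map_f ρ), hu,
      map_add, map_smul, ← Module.End.mul_apply (ρ f ^ n), ← pow_succ,
      ← Module.End.mul_apply (ρ f ^ (n + 1)), ← pow_succ]
    push_cast
    module

lemma map_e_pow_succ_map_f_apply (t : IsSl2Triple h e f) {u : V} {ν : ℂ} (hu : ρ h u = ν • u)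
    (n : ℕ) :
    (ρ e ^ (n + 1)) (ρ f u) =
      ρ f ((ρ e ^ (n + 1)) u) + (((n : ℂ) + 1) * (ν + n)) • (ρ e ^ n) u := by
  have hu' : ρ (-h) u = -ν • u := by rw [map_neg, LinearMap.neg_apply, hu, neg_smul]
  rw [t.symm.map_e_map_f_pow_succ_apply ρ hu' n]
  module

lemma map_e_slProjFactor_apply (t : IsSl2Triple h e f) (d : ℕ → ℂ) {w : V} {μ : ℂ}
    (hw : ρ h w = μ • w) (N : ℕ) :
    ρ e (slProjFactor (ρ f) (ρ e) d N w) =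
      extremalCoeff d N • (ρ f ^ N) ((ρ e ^ (N + 1)) w) +
        ∑ m ∈ range N, (extremalCoeff d m + ((m : ℂ) + 1) * (μ + m + 2) * extremalCoeff d (m + 1)) •
          (ρ f ^ m) ((ρ e ^ (m + 1)) w) := by
  induction N with
  | zero => simp [slProjFactor_apply]
  | succ N ih =>
    rw [slProjFactor_succ_apply, map_add, map_smul, ih,
      t.map_e_map_f_pow_succ_apply ρ (apply_pow_apply_of_lie_eq_smul (t.lie_map_h_map_e ρ) hw _) N,
      ← Module.End.mul_apply (ρ e), ← pow_succ', sum_range_succ]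
    push_cast
    module

lemma map_e_slProjFactor_eq_zero (t : IsSl2Triple h e f) {μ : ℂ}
    (hd : ∀ k : ℕ, 1 ≤ k → μ + k + 1 ≠ 0) {N : ℕ} (hN : ρ e ^ (N + 1) = 0) {w : V}
    (hw : ρ h w = μ • w) :
    ρ e (slProjFactor (ρ f) (ρ e) (fun k => μ + k + 1) N w) = 0 := by
  rw [t.map_e_slProjFactor_apply ρ _ hw, hN, LinearMap.zero_apply, map_zero, smul_zero, zero_add]
  refine sum_eq_zero fun m _ => ?_
  have hc := extremalCoeff_add_mul_extremalCoeff_succ (fun k : ℕ => μ + k + 1) m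
    (hd (m + 1) m.succ_pos)
  push_cast at hc
  rw [show μ + m + 2 = μ + (m + 1) + 1 by ring, hc, zero_smul]

lemma slProjFactor_map_f_apply_add_sum (t : IsSl2Triple h e f) {μ : ℂ}
    (hd : ∀ k : ℕ, 1 ≤ k → μ + k + 1 ≠ 0) {y : V} (hy : ρ h y = (μ + 1) • y) (N : ℕ) :
    slProjFactor (ρ f) (ρ e) (fun k => μ + k + 1) N (ρ f y) +
      ∑ m ∈ range N, (((m : ℂ) + 1) * extremalCoeff (fun k => μ + k + 1) (m + 1)) •
        (ρ f ^ (m + 1)) ((ρ e ^ m) y) =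
      extremalCoeff (fun k => μ + k + 1) N • (ρ f ^ (N + 1)) ((ρ e ^ N) y) := by
  induction N with
  | zero => simp [slProjFactor_apply]
  | succ N ih =>
    have hc := extremalCoeff_add_mul_extremalCoeff_succ (fun k => μ + k + 1) N
      (hd (N + 1) N.succ_pos)
    push_cast at hc
    rw [slProjFactor_succ_apply, sum_range_succ, add_add_add_comm, ih,
      t.map_e_pow_succ_map_f_apply ρ hy, map_add, map_smul,
      ← Module.End.mul_apply (ρ f ^ (N + 1)) (ρ f), ← pow_succ]
    linear_combination (norm := module) hc • (ρ f ^ (N + 1)) ((ρ e ^ N) y)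

end IsSl2Triple

end Sl2

section Sl3Brackets

attribute [local simp] sl3E₁₂ sl3E₁₃ sl3E₂₃ sl3E₂₁ sl3E₃₁ sl3E₃₂ sl3H₁ sl3H₂ Ring.lie_def
  Matrix.mul_apply Matrix.single val_single Fin.sum_univ_three Fin.ext_iff

lemma isSl2Triple_sl3H₁_sl3E₁₂_sl3E₂₁ : IsSl2Triple sl3H₁ sl3E₁₂ sl3E₂₁ where
  h_ne_zero h := by simpa using congrArg (fun x : sl (Fin 3) ℂ => x.val 0 0) h
  lie_e_f := by ext i j; fin_cases i <;> fin_cases j <;> norm_num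
  lie_h_e_nsmul := by ext i j; fin_cases i <;> fin_cases j <;> norm_num
  lie_h_f_nsmul := by ext i j; fin_cases i <;> fin_cases j <;> norm_num

lemma isSl2Triple_sl3H₂_sl3E₂₃_sl3E₃₂ : IsSl2Triple sl3H₂ sl3E₂₃ sl3E₃₂ where
  h_ne_zero h := by simpa using congrArg (fun x : sl (Fin 3) ℂ => x.val 1 1) h
  lie_e_f := by ext i j; fin_cases i <;> fin_cases j <;> norm_num
  lie_h_e_nsmul := by ext i j; fin_cases i <;> fin_cases j <;> norm_num
  lie_h_f_nsmul := by ext i j; fin_cases i <;> fin_cases j <;> norm_num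

lemma isSl2Triple_sl3H₁_add_sl3H₂_sl3E₁₃_sl3E₃₁ :
    IsSl2Triple (sl3H₁ + sl3H₂) sl3E₁₃ sl3E₃₁ where
  h_ne_zero h := by simpa using congrArg (fun x : sl (Fin 3) ℂ => x.val 0 0) h
  lie_e_f := by ext i j; fin_cases i <;> fin_cases j <;> norm_num
  lie_h_e_nsmul := by ext i j; fin_cases i <;> fin_cases j <;> norm_num
  lie_h_f_nsmul := by ext i j; fin_cases i <;> fin_cases j <;> norm_num

lemma lie_sl3H₁_sl3E₂₃ : ⁅sl3H₁, sl3E₂₃⁆ = -sl3E₂₃ := by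
  ext i j; fin_cases i <;> fin_cases j <;> norm_num

lemma lie_sl3H₁_sl3E₃₂ : ⁅sl3H₁, sl3E₃₂⁆ = sl3E₃₂ := by
  ext i j; fin_cases i <;> fin_cases j <;> norm_num

lemma lie_sl3H₁_sl3E₁₃ : ⁅sl3H₁, sl3E₁₃⁆ = sl3E₁₃ := by
  ext i j; fin_cases i <;> fin_cases j <;> norm_num

lemma lie_sl3H₁_sl3E₃₁ : ⁅sl3H₁, sl3E₃₁⁆ = -sl3E₃₁ := by
  ext i j; fin_cases i <;> fin_cases j <;> norm_num

lemma lie_sl3E₁₂_sl3E₂₃ : ⁅sl3E₁₂, sl3E₂₃⁆ = sl3E₁₃ := by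
  ext i j; fin_cases i <;> fin_cases j <;> norm_num

lemma lie_sl3E₂₃_sl3E₁₂ : ⁅sl3E₂₃, sl3E₁₂⁆ = -sl3E₁₃ := by
  rw [← lie_skew, lie_sl3E₁₂_sl3E₂₃]

lemma lie_sl3E₂₃_sl3E₃₁ : ⁅sl3E₂₃, sl3E₃₁⁆ = sl3E₂₁ := by
  ext i j; fin_cases i <;> fin_cases j <;> norm_num

lemma lie_sl3E₂₃_sl3E₁₃ : ⁅sl3E₂₃, sl3E₁₃⁆ = 0 := by
  ext i j; fin_cases i <;> fin_cases j <;> norm_num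

lemma lie_sl3E₂₃_sl3E₂₁ : ⁅sl3E₂₃, sl3E₂₁⁆ = 0 := by
  ext i j; fin_cases i <;> fin_cases j <;> norm_num

lemma lie_sl3E₂₁_sl3E₃₁ : ⁅sl3E₂₁, sl3E₃₁⁆ = 0 := by
  ext i j; fin_cases i <;> fin_cases j <;> norm_num

lemma lie_sl3E₁₃_sl3E₁₂ : ⁅sl3E₁₃, sl3E₁₂⁆ = 0 := by
  ext i j; fin_cases i <;> fin_cases j <;> norm_num

end Sl3Brackets

section Sl3

variable {V : Type*} [AddCommGroup V] [Module ℂ V] (ρ : sl (Fin 3) ℂ →ₗ⁅ℂ⁆ Module.End ℂ V)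

lemma map_sl3E₂₃_slProjFactor_sl3E₁₃ {μ : ℂ} (hd : ∀ k : ℕ, 1 ≤ k → μ + k + 2 ≠ 0) {N : ℕ}
    (hN : ρ sl3E₁₃ ^ (N + 1) = 0) {w : V} (hw : ρ (sl3H₁ + sl3H₂) w = μ • w)
    (hw₂₃ : ρ sl3E₂₃ w = 0) :
    ρ sl3E₂₃ (slProjFactor (ρ sl3E₃₁) (ρ sl3E₁₃) (fun k => μ + k + 2) N w) =
      -ρ sl3E₂₁ (ρ sl3E₁₃ (slProjFactor (ρ sl3E₃₁) (ρ sl3E₁₃) (fun k => μ + k + 2) N w)) := by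
  have hE₂₁ := commute_map_of_lie_eq_zero ρ lie_sl3E₂₁_sl3E₃₁
  rw [apply_slProjFactor_apply_of_commute_raise (commute_map_of_lie_eq_zero ρ lie_sl3E₂₃_sl3E₁₃)
      (map_lie_eq_of_lie_eq ρ lie_sl3E₂₃_sl3E₃₁) hE₂₁ _ N hw₂₃,
    isSl2Triple_sl3H₁_add_sl3H₂_sl3E₁₃_sl3E₃₁.map_e_slProjFactor_apply ρ _ hw, hN,
    LinearMap.zero_apply, map_zero, smul_zero, zero_add, map_sum, ← sum_neg_distrib]
  refine sum_congr rfl fun m _ => ?_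
  have hc := extremalCoeff_add_mul_extremalCoeff_succ (fun k : ℕ => μ + k + 2) m
    (hd (m + 1) m.succ_pos)
  rw [map_smul, apply_pow_apply_of_commute hE₂₁, ← neg_smul]
  congr 1
  push_cast at hc
  linear_combination hc

lemma map_sl3E₂₃_slProjFactor_sl3E₁₂_eq_zero {μ : ℂ} (hd : ∀ k : ℕ, 1 ≤ k → μ + k + 1 ≠ 0)
    {N : ℕ} (hN : ρ sl3E₁₂ ^ (N + 1) = 0) {x : V} (hx : ρ sl3H₁ x = μ • x)
    (hx₂₃ : ρ sl3E₂₃ x = -ρ sl3E₂₁ (ρ sl3E₁₃ x)) :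
    ρ sl3E₂₃ (slProjFactor (ρ sl3E₂₁) (ρ sl3E₁₂) (fun k => μ + k + 1) N x) = 0 := by
  have hC : ⁅ρ sl3E₂₃, ρ sl3E₁₂⁆ = -ρ sl3E₁₃ := by
    rw [map_lie_eq_of_lie_eq ρ lie_sl3E₂₃_sl3E₁₂, map_neg]
  have hCE : Commute (-ρ sl3E₁₃) (ρ sl3E₁₂) :=
    (commute_map_of_lie_eq_zero ρ lie_sl3E₁₃_sl3E₁₂).neg_left
  have hz : ρ sl3H₁ (ρ sl3E₁₃ x) = (μ + 1) • ρ sl3E₁₃ x := by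
    rw [apply_apply_of_lie_eq (map_lie_eq_of_lie_eq ρ lie_sl3H₁_sl3E₁₃), hx, map_smul, add_smul,
      one_smul]
  have hNz : (ρ sl3E₁₂ ^ N) (ρ sl3E₁₃ x) = 0 := by
    simpa using pow_apply_eq_zero_of_lie_eq hC hCE hN x
  rw [apply_slProjFactor_apply_of_commute_lower (commute_map_of_lie_eq_zero ρ lie_sl3E₂₃_sl3E₂₁)
    hC hCE, hx₂₃, map_neg]
  simp only [LinearMap.neg_apply, map_neg, smul_neg, sum_neg_distrib, ← neg_add]
  rw [isSl2Triple_sl3H₁_sl3E₁₂_sl3E₂₁.slProjFactor_map_f_apply_add_sum ρ hd hz, hNz, map_zero,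
    smul_zero, neg_zero]

end Sl3

/-- The `sl(3,ℂ)` extremal projector sends every weight-`(lam₁,lam₂)` vector (on which the
raising operators act nilpotently) to a highest weight vector:
`ρ(E₁₂)(Pv) = 0`, `ρ(E₂₃)(Pv) = 0` and `ρ(E₁₃)(Pv) = 0`. -/
theorem sl3_extremal_projector_highest_weight
    {V : Type*} [AddCommGroup V] [Module ℂ V]
    (ρ : sl (Fin 3) ℂ →ₗ⁅ℂ⁆ Module.End ℂ V)
    (lam₁ lam₂ : ℂ)
    (hd₁ : ∀ k : ℕ, 1 ≤ k → lam₁ + k + 1 ≠ 0)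
    (hd₂ : ∀ k : ℕ, 1 ≤ k → lam₂ + k + 1 ≠ 0)
    (hd₃ : ∀ k : ℕ, 1 ≤ k → lam₁ + lam₂ + k + 2 ≠ 0)
    (N : ℕ)
    (h12 : (ρ sl3E₁₂) ^ (N + 1) = 0)
    (h13 : (ρ sl3E₁₃) ^ (N + 1) = 0)
    (h23 : (ρ sl3E₂₃) ^ (N + 1) = 0)
    (v : V)
    (hw₁ : (ρ sl3H₁) v = lam₁ • v)
    (hw₂ : (ρ sl3H₂) v = lam₂ • v) :
    (ρ sl3E₁₂) (sl3Projector ρ lam₁ lam₂ N v) = 0 ∧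
    (ρ sl3E₂₃) (sl3Projector ρ lam₁ lam₂ N v) = 0 ∧
    (ρ sl3E₁₃) (sl3Projector ρ lam₁ lam₂ N v) = 0 := by
  have t₁₂ := isSl2Triple_sl3H₁_sl3E₁₂_sl3E₂₁
  have t₂₃ := isSl2Triple_sl3H₂_sl3E₂₃_sl3E₃₂
  set w := slProjFactor (ρ sl3E₃₂) (ρ sl3E₂₃) (fun k => lam₂ + k + 1) N v
  set x := slProjFactor (ρ sl3E₃₁) (ρ sl3E₁₃) (fun k => lam₁ + lam₂ + k + 2) N w
  have hPv : sl3Projector ρ lam₁ lam₂ N v =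
      slProjFactor (ρ sl3E₂₁) (ρ sl3E₁₂) (fun k => lam₁ + k + 1) N x := rfl
  have hwH₁ : ρ sl3H₁ w = lam₁ • w := apply_slProjFactor_apply_of_lie_eq_smul (c := -1)
    (by simp [map_lie_eq_of_lie_eq ρ lie_sl3H₁_sl3E₂₃])
    (by simp [map_lie_eq_of_lie_eq ρ lie_sl3H₁_sl3E₃₂]) _ _ hw₁
  have hwH₂ : ρ sl3H₂ w = lam₂ • w :=
    apply_slProjFactor_apply_of_lie_eq_smul (t₂₃.lie_map_h_map_e ρ) (t₂₃.lie_map_h_map_f ρ) _ _ hw₂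
  have hxH₁ : ρ sl3H₁ x = lam₁ • x := apply_slProjFactor_apply_of_lie_eq_smul (c := 1)
    (by simp [map_lie_eq_of_lie_eq ρ lie_sl3H₁_sl3E₁₃])
    (by simp [map_lie_eq_of_lie_eq ρ lie_sl3H₁_sl3E₃₁]) _ _ hwH₁
  have hwE₂₃ : ρ sl3E₂₃ w = 0 := t₂₃.map_e_slProjFactor_eq_zero ρ hd₂ h23 hw₂
  have hxE₂₃ := map_sl3E₂₃_slProjFactor_sl3E₁₃ ρ hd₃ h13
    (by rw [map_add, LinearMap.add_apply, hwH₁, hwH₂, add_smul]) hwE₂₃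
  have hE₁₂ : ρ sl3E₁₂ (sl3Projector ρ lam₁ lam₂ N v) = 0 :=
    hPv ▸ t₁₂.map_e_slProjFactor_eq_zero ρ hd₁ h12 hxH₁
  have hE₂₃ : ρ sl3E₂₃ (sl3Projector ρ lam₁ lam₂ N v) = 0 :=
    hPv ▸ map_sl3E₂₃_slProjFactor_sl3E₁₂_eq_zero ρ hd₁ h12 hxH₁ hxE₂₃
  refine ⟨hE₁₂, hE₂₃, ?_⟩
  have h := apply_apply_of_lie_eq (map_lie_eq_of_lie_eq ρ lie_sl3E₁₂_sl3E₂₃)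
    (sl3Projector ρ lam₁ lam₂ N v)
  rwa [hE₂₃, hE₁₂, map_zero, map_zero, zero_add, eq_comm] at h
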